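/- arXiv:1705.05663 — 2 statements merged into one kernel-verified Lean document; each statement's English description precedes it below -/
import Mathlib

section
/- For 0 < V ≤ 1/√2, the white noise-BB84 box admits a LHV-LHS decomposition with a hidden variable of dimension 4: p(ab|xy) = Σ_{λ=0}^{3} (1/4)·P(a|x,λ)·P(b|y,ρ_λ), where P(a|x,λ) ranges over the four deterministic single-party boxes P_D^{00}, P_D^{01}, P_D^{10}, P_D^{11}, and each P(b|y,ρ_λ) is a single-party distribution assigning probabilities (1±V)/2 as specified: P(b|y,ρ₀) has rows ((1+V)/2,(1-V)/2),((1-V)/2,(1+V)/2); P(b|y,ρ₁) the transpose pattern ((1-V)/2,(1+V)/2),((1+V)/2,(1-V)/2); P(b|y,ρ₂) = ((1+V)/2,(1-V)/2) on both rows; P(b|y,ρ₃) = ((1-V)/2,(1+V)/2) on both rows. -/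
/-!
Bob's four hidden states have outcome distributions `(1 + (-1)^b V s_λ(y)) / 2` with signs
`s_λ(y) = ±1`. Weighting them by Alice's deterministic boxes, the constant part averages to the
uniform marginal `1/4`, while the correlation term `∑_λ [a = α_λ x + β_λ] s_λ(y)` equals
`(-1)^a ((-1)^x + (-1)^y)`, which vanishes for `x ≠ y` and is `2 (-1)^(a + xy)` for `x = y`.
-/

open Finset

/-- The white noise-BB84 box. -/
noncomputable def pBB84 (V : ℝ) (a b x y : Fin 2) : ℝ :=
  (1 + (-1 : ℝ) ^ ((a : ℕ) + (b : ℕ) + (x : ℕ) * (y : ℕ)) * (if x = y then V else 0)) / 4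

/-- Single-party deterministic box P_D^{αβ}. -/
def PD (α β : Fin 2) (a x : Fin 2) : ℝ :=
  if a = α * x + β then 1 else 0

/-- Alice's deterministic responses in the dimension-4 LHV-LHS decomposition. -/
def PAlice : Fin 4 → Fin 2 → Fin 2 → ℝ := ![PD 0 0, PD 0 1, PD 1 0, PD 1 1]

/-- Bob's local-hidden-state response distributions P(b|y,ρ_λ) of the dimension-4
LHV-LHS decomposition of the white noise-BB84 box. -/
noncomputable def PBob (V : ℝ) : Fin 4 → Fin 2 → Fin 2 → ℝ :=
  ![fun y b => if y = b then (1 + V) / 2 else (1 - V) / 2,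
    fun y b => if y = b then (1 - V) / 2 else (1 + V) / 2,
    fun _ b => if b = 0 then (1 + V) / 2 else (1 - V) / 2,
    fun _ b => if b = 0 then (1 - V) / 2 else (1 + V) / 2]

/-- Bob's bias `V * bobBias λ y` is the expectation of `(-1)^b` in the hidden state `ρ_λ`: as Bloch
vectors in the plane of the two BB84 measurements the states are `V (±1, ∓1)` and `V (±1, ±1)`,
of length `√2 V`. -/
def bobBias : Fin 4 → Fin 2 → ℝ :=
  ![fun y => (-1) ^ (y : ℕ), fun y => -(-1) ^ (y : ℕ), fun _ => 1, fun _ => -1]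

lemma PBob_eq (V : ℝ) (lam : Fin 4) (y b : Fin 2) :
    PBob V lam y b = (1 + (-1) ^ (b : ℕ) * V * bobBias lam y) / 2 := by
  fin_cases lam <;> fin_cases y <;> fin_cases b <;> simp [PBob, bobBias] <;> ring

/-- For each slope `α` exactly one offset `β` makes `P_D^{αβ}` output `a`. -/
lemma sum_PAlice (a x : Fin 2) : ∑ lam, PAlice lam a x = 2 := by
  fin_cases a <;> fin_cases x <;> simp [PAlice, PD, Fin.sum_univ_four] <;> norm_num

lemma sum_PAlice_mul_bobBias (a x y : Fin 2) :
    ∑ lam, PAlice lam a x * bobBias lam y =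
      if x = y then 2 * (-1) ^ ((a : ℕ) + (x : ℕ) * (y : ℕ)) else 0 := by
  fin_cases a <;> fin_cases x <;> fin_cases y <;>
    simp [PAlice, PD, bobBias, Fin.sum_univ_four] <;> norm_num

theorem bb84_dim4_LHV_LHS_decomposition_general (V : ℝ) :
    ∀ a b x y : Fin 2,
      pBB84 V a b x y = ∑ lam : Fin 4, (1 / 4 : ℝ) * PAlice lam a x * PBob V lam y b := by
  intro a b x y
  have hsplit : ∑ lam, (1 / 4 : ℝ) * PAlice lam a x * PBob V lam y b =
      (∑ lam, PAlice lam a x) / 8 +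
        (-1) ^ (b : ℕ) * V / 8 * ∑ lam, PAlice lam a x * bobBias lam y := by
    simp only [PBob_eq, Finset.sum_div, Finset.mul_sum, ← Finset.sum_add_distrib]
    exact Finset.sum_congr rfl fun _ _ => by ring
  rw [hsplit, sum_PAlice, sum_PAlice_mul_bobBias, pBB84]
  split_ifs <;> ring

/-- For 0 < V ≤ 1/√2 the white noise-BB84 box admits the dimension-4 LHV-LHS
decomposition with uniform weights 1/4. -/
theorem bb84_dim4_LHV_LHS_decomposition (V : ℝ) (hV0 : 0 < V) (hV1 : V ≤ (Real.sqrt 2)⁻¹) :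
    ∀ a b x y : Fin 2,
      pBB84 V a b x y = ∑ lam : Fin 4, (1 / 4 : ℝ) * PAlice lam a x * PBob V lam y b :=
  bb84_dim4_LHV_LHS_decomposition_general V
end

section
/- The white noise-BB84 box with 0 < V ≤ 1 admits no decomposition p(ab|xy) = (1/2)P_D^{00}(a|x)Q₀(b|y) + (1/2)P_D^{01}(a|x)Q₁(b|y) for any single-party distributions Q₀, Q₁: matching the (x,y)=(0,0) and (1,1) entries of the box forces Q₀, Q₁ uniquely, and the resulting box then fails to match the (x,y)=(0,1) entries. -/
open Finset

theorem bb84_no_PD00_PD01_decomposition_general (V : ℝ) (hV0 : 0 < V) :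
    ¬ ∃ (Q₀ Q₁ : Fin 2 → Fin 2 → ℝ),
        (∀ y b, 0 ≤ Q₀ y b) ∧ (∀ y, ∑ b : Fin 2, Q₀ y b = 1) ∧
        (∀ y b, 0 ≤ Q₁ y b) ∧ (∀ y, ∑ b : Fin 2, Q₁ y b = 1) ∧
        (∀ a b x y : Fin 2,
          pBB84 V a b x y
            = (1 / 2 : ℝ) * PD 0 0 a x * Q₀ y b + (1 / 2 : ℝ) * PD 0 1 a x * Q₁ y b) := by
  rintro ⟨Q₀, Q₁, -, -, -, -, h⟩
  -- For a = 0 only the P_D^{00} term survives, so the entries (x, y) = (0, 1) and (1, 1)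
  -- both equal Q₀(0|1)/2, whereas the box gives 1/4 and (1 - V)/4.
  have h01 : (1 / 4 : ℝ) = 1 / 2 * Q₀ 1 0 := by simpa [pBB84, PD] using h 0 0 0 1
  have h11 : (1 - V) / 4 = 1 / 2 * Q₀ 1 0 := by simpa [pBB84, PD, sub_eq_add_neg] using h 0 0 1 1
  linarith

/-- The white noise-BB84 box admits no decomposition
(1/2)P_D^{00}·Q₀ + (1/2)P_D^{01}·Q₁ with single-party distributions Q₀, Q₁. -/
theorem bb84_no_PD00_PD01_decomposition (V : ℝ) (hV0 : 0 < V) (hV1 : V ≤ 1) :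
    ¬ ∃ (Q₀ Q₁ : Fin 2 → Fin 2 → ℝ),
        (∀ y b, 0 ≤ Q₀ y b) ∧ (∀ y, ∑ b : Fin 2, Q₀ y b = 1) ∧
        (∀ y b, 0 ≤ Q₁ y b) ∧ (∀ y, ∑ b : Fin 2, Q₁ y b = 1) ∧
        (∀ a b x y : Fin 2,
          pBB84 V a b x y
            = (1 / 2 : ℝ) * PD 0 0 a x * Q₀ y b + (1 / 2 : ℝ) * PD 0 1 a x * Q₁ y b) :=
  bb84_no_PD00_PD01_decomposition_general V hV0
end
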